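/- The Hemlock algorithm has the FIFO property: in every execution of the Hemlock transition-system model, for every lock L, threads enter the critical section protected by L in exactly the order in which they execute the entry doorstep for L; that is, there is no pair of acquisitions where one thread executes the entry doorstep for L after another yet enters the critical section protected by L before it. -/

import Mathlib

namespace Hemlock

/-- Program counter locations of a thread in the Hemlock algorithm. -/
inductive PC where
  | remainder  -- in the remainder section
  | entrySpin  -- in the entry code, spinning on the predecessor's Grant field
  | crit       -- in the critical section
  | exitCAS    -- in the exit code, about to perform the CAS on Tail
  | exitDoor   -- in the exit code, about to perform the exit doorstep (write Grant self := some L)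
  | exitSpin   -- in the exit code, spinning on its own Grant field
deriving DecidableEq

/-- A global state of the Hemlock transition system. -/
structure St (Thread Lock : Type) where
  Tail : Lock → Option Thread        -- the Tail field of each lock
  Grant : Thread → Option Lock       -- the Grant field of each thread
  pc : Thread → PC                   -- program counter of each thread
  lk : Thread → Option Lock          -- the lock currently being acquired/released by each thread
  pred : Thread → Option Thread      -- value returned by each thread's last SWAP

variable {Thread Lock : Type} [DecidableEq Thread] [DecidableEq Lock]

/-- The initial state: all Tail and Grant fields are none, all threads in the remainder. -/
def initSt : St Thread Lock :=
  ⟨fun _ => none, fun _ => none, fun _ => .remainder, fun _ => none, fun _ => none⟩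

/-- One atomic transition of thread `t`. -/
inductive Step (t : Thread) : St Thread Lock → St Thread Lock → Prop where
  /-- a step inside the remainder section -/
  | remainderStay (s : St Thread Lock) (h : s.pc t = .remainder) :
      Step t s s
  /-- the entry doorstep for lock `L`: atomic SWAP on `Tail L`, storing the old value in `pred`;
      if the SWAP returned `none` the thread enters the critical section, else it spins -/
  | doorstep (s : St Thread Lock) (L : Lock) (h : s.pc t = .remainder) :
      Step t s ⟨Function.update s.Tail L (some t), s.Grant,
        Function.update s.pc t (if s.Tail L = none then .crit else .entrySpin),
        Function.update s.lk t (some L),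
        Function.update s.pred t (s.Tail L)⟩
  /-- entry-code busy-wait loop: read `Grant p`; it is not yet `some L`, keep spinning -/
  | spinWait (s : St Thread Lock) (p : Thread) (L : Lock)
      (h : s.pc t = .entrySpin) (hp : s.pred t = some p) (hl : s.lk t = some L)
      (hg : s.Grant p ≠ some L) :
      Step t s s
  /-- entry-code busy-wait loop: read `Grant p = some L`; write `Grant p := none`
      and enter the critical section -/
  | spinAcquire (s : St Thread Lock) (p : Thread) (L : Lock)
      (h : s.pc t = .entrySpin) (hp : s.pred t = some p) (hl : s.lk t = some L)
      (hg : s.Grant p = some L) :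
      Step t s ⟨s.Tail, Function.update s.Grant p none,
        Function.update s.pc t .crit, s.lk, s.pred⟩
  /-- a step inside the critical section -/
  | critStay (s : St Thread Lock) (h : s.pc t = .crit) :
      Step t s s
  /-- leave the critical section and begin the exit code -/
  | exitStart (s : St Thread Lock) (h : s.pc t = .crit) :
      Step t s ⟨s.Tail, s.Grant, Function.update s.pc t .exitCAS, s.lk, s.pred⟩
  /-- successful CAS: `Tail L = some self`, so set `Tail L := none` and
      complete the exit code, returning to the remainder section -/
  | casSucc (s : St Thread Lock) (L : Lock)
      (h : s.pc t = .exitCAS) (hl : s.lk t = some L) (ht : s.Tail L = some t) :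
      Step t s ⟨Function.update s.Tail L none, s.Grant,
        Function.update s.pc t .remainder, Function.update s.lk t none, s.pred⟩
  /-- failed CAS: `Tail L ≠ some self`; proceed to the exit doorstep -/
  | casFail (s : St Thread Lock) (L : Lock)
      (h : s.pc t = .exitCAS) (hl : s.lk t = some L) (ht : s.Tail L ≠ some t) :
      Step t s ⟨s.Tail, s.Grant, Function.update s.pc t .exitDoor, s.lk, s.pred⟩
  /-- the exit doorstep: write `Grant self := some L` and start spinning on `Grant self` -/
  | exitDoorstep (s : St Thread Lock) (L : Lock)
      (h : s.pc t = .exitDoor) (hl : s.lk t = some L) :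
      Step t s ⟨s.Tail, Function.update s.Grant t (some L),
        Function.update s.pc t .exitSpin, s.lk, s.pred⟩
  /-- exit-code busy-wait loop: read `Grant self`; it is not yet `none`, keep spinning -/
  | exitSpinWait (s : St Thread Lock) (h : s.pc t = .exitSpin) (hg : s.Grant t ≠ none) :
      Step t s s
  /-- exit-code busy-wait loop: read `Grant self = none`; complete the exit code,
      returning to the remainder section -/
  | exitDone (s : St Thread Lock) (h : s.pc t = .exitSpin) (hg : s.Grant t = none) :
      Step t s ⟨s.Tail, s.Grant, Function.update s.pc t .remainder,
        Function.update s.lk t none, s.pred⟩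

/-- An execution of the Hemlock transition system: an infinite sequence of states starting
    from the initial state, where each step is one transition of the scheduled thread;
    every thread whose program counter is in the entry, exit or critical section eventually
    takes another step, and every thread leaves each critical section after finitely
    many steps. -/
structure Execution (Thread Lock : Type) [DecidableEq Thread] [DecidableEq Lock]
    [Fintype Thread] where
  states : ℕ → St Thread Lock
  sched : ℕ → Thread
  init : states 0 = initSt
  steps : ∀ n, Step (sched n) (states n) (states (n + 1))
  fair : ∀ n t, (states n).pc t ≠ PC.remainder → ∃ m, n ≤ m ∧ sched m = t
  critFinite : ∀ n t, (states n).pc t = PC.crit → ∃ m, n ≤ m ∧ (states m).pc t ≠ PC.crit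

variable [Fintype Thread]

/-- Thread `t` executes the entry doorstep (the SWAP) for lock `L` at time `n`. -/
def doorstepAt (E : Execution Thread Lock) (n : ℕ) (t : Thread) (L : Lock) : Prop :=
  E.sched n = t ∧ (E.states n).pc t = PC.remainder ∧
    (E.states (n + 1)).pc t ≠ PC.remainder ∧ (E.states (n + 1)).lk t = some L

/-- Thread `t` performs the CAS step of the exit code for lock `L` at time `n`
    (successful or not). -/
def casAt (E : Execution Thread Lock) (n : ℕ) (t : Thread) (L : Lock) : Prop :=
  E.sched n = t ∧ (E.states n).pc t = PC.exitCAS ∧ (E.states n).lk t = some L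

/-- Thread `t` performs the exit doorstep (the write `Grant t := some L`) at time `n`. -/
def exitDoorAt (E : Execution Thread Lock) (n : ℕ) (t : Thread) (L : Lock) : Prop :=
  E.sched n = t ∧ (E.states n).pc t = PC.exitDoor ∧ (E.states n).lk t = some L

/-- Thread `t` is in the critical section protected by `L` in state `s`. -/
def inCS (s : St Thread Lock) (t : Thread) (L : Lock) : Prop :=
  s.pc t = PC.crit ∧ s.lk t = some L

/-- Thread `t` is in the entry code for lock `L` in state `s`. -/
def inEntry (s : St Thread Lock) (t : Thread) (L : Lock) : Prop :=
  s.pc t = PC.entrySpin ∧ s.lk t = some L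

/-- Thread `t` enters the critical section protected by `L` at step `m`. -/
def entersCSAt (E : Execution Thread Lock) (m : ℕ) (t : Thread) (L : Lock) : Prop :=
  E.sched m = t ∧ (E.states m).pc t ≠ PC.crit ∧
    (E.states (m + 1)).pc t = PC.crit ∧ (E.states (m + 1)).lk t = some L

/-- Thread `t` completes its critical section protected by `L` at step `k`
    (leaving the critical section and beginning the exit code). -/
def exitsCSAt (E : Execution Thread Lock) (k : ℕ) (t : Thread) (L : Lock) : Prop :=
  E.sched k = t ∧ (E.states k).pc t = PC.crit ∧ (E.states k).lk t = some L ∧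
    (E.states (k + 1)).pc t ≠ PC.crit

/-- Thread `t` completes the exit code for lock `L` at step `k`
    (returning to the remainder section). -/
def completesExitAt (E : Execution Thread Lock) (k : ℕ) (t : Thread) (L : Lock) : Prop :=
  E.sched k = t ∧ (E.states k).lk t = some L ∧
    (E.states k).pc t ≠ PC.remainder ∧ (E.states (k + 1)).pc t = PC.remainder

/-- `m` is the first time at or after `n` at which thread `t` enters the
    critical section protected by `L`. -/
def firstEntryAfter (E : Execution Thread Lock) (n m : ℕ) (t : Thread) (L : Lock) : Prop :=
  n ≤ m ∧ entersCSAt E m t L ∧ ∀ k, n ≤ k → k < m → ¬ entersCSAt E k t L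

/-- At time `n`, thread `T` is spinning in the entry code waiting for `Grant w`
    to become `some L`: its next step reads `Grant w` inside the entry-code
    busy-wait loop with current lock `L` and `pred = some w`. -/
def spinningEntryFor (E : Execution Thread Lock) (n : ℕ) (T w : Thread) (L : Lock) : Prop :=
  (E.states n).pc T = PC.entrySpin ∧ (E.states n).pred T = some w ∧
    (E.states n).lk T = some L

/-- At time `n`, thread `T` is spinning on the word `Grant w`: its next step reads
    `Grant w` inside one of the two busy-wait loops (the entry-code loop with
    `pred = some w`, or the exit-code loop executed by `w` itself). -/
def spinningOn (E : Execution Thread Lock) (n : ℕ) (T w : Thread) : Prop :=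
  ((E.states n).pc T = PC.entrySpin ∧ (E.states n).pred T = some w) ∨
    (T = w ∧ (E.states n).pc T = PC.exitSpin)

/-- Lock `L` is associated with thread `T` at time `n`: `T` has executed the entry
    doorstep for `L` and has not yet completed the exit code for `L`. -/
def associated (E : Execution Thread Lock) (n : ℕ) (T : Thread) (L : Lock) : Prop :=
  ∃ m, m < n ∧ doorstepAt E m T L ∧ ∀ k, m < k → k < n → ¬ completesExitAt E k T L

/-! ### Auxiliary machinery for the FIFO proof -/

section FifoAux

open List

private theorem memOfGetLast? {α : Type*} : ∀ {l : List α} {a : α}, l.getLast? = some a → a ∈ l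
  | [], a, h => by simp at h
  | [b], a, h => by simp_all
  | b :: c :: l, a, h => by
    rw [List.getLast?_cons_cons] at h
    exact List.mem_cons_of_mem _ (memOfGetLast? h)

private theorem chain'OfMemImp {α : Type*} {R S : α → α → Prop} :
    ∀ {l : List α}, (∀ a b, b ∈ l → R a b → S a b) → l.Chain' R → l.Chain' S
  | [], _, _ => List.isChain_nil
  | [a], _, _ => List.isChain_singleton a
  | a :: b :: l, h, hc => by
    simp only [List.Chain'] at hc ⊢
    rw [List.isChain_cons_cons] at hc ⊢
    exact ⟨h a b (by simp) hc.1,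
      chain'OfMemImp (fun x y hy => h x y (List.mem_cons_of_mem _ hy)) hc.2⟩

private theorem chain'MemCases {α : Type*} {R : α → α → Prop} :
    ∀ {l : List α} {a : α}, l.Chain' R → a ∈ l →
      (∃ l', l = a :: l') ∨ ∃ b l1 l2, l = l1 ++ b :: a :: l2 ∧ R b a
  | [], a, _, ha => absurd ha (by simp)
  | c :: l', a, hc, ha => by
    rcases List.mem_cons.1 ha with rfl | ha'
    · exact Or.inl ⟨l', rfl⟩
    · rcases chain'MemCases hc.tail ha' with ⟨l'', rfl⟩ | ⟨b, l1, l2, rfl, hR⟩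
      · exact Or.inr ⟨c, [], l'', rfl, (List.isChain_cons_cons.1 hc).1⟩
      · exact Or.inr ⟨b, c :: l1, l2, rfl, hR⟩

private theorem sublistTailOfMem {α : Type*} {a b h : α} {tl : List α}
    (hs : [a, b] <+ h :: tl) (hmem : a ∈ tl) (hnd : (h :: tl).Nodup) : [a, b] <+ tl := by
  cases hs with
  | cons _ h' => exact h'
  | cons_cons _ h' => exact absurd hmem (List.nodup_cons.1 hnd).1

variable {Thread Lock : Type} [DecidableEq Thread] [DecidableEq Lock] [Fintype Thread]

/-- Case analysis on one step. -/
private theorem step_cases {u : Thread} {s s' : St Thread Lock} (h : Step u s s') :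
    (s' = s) ∨
    (∃ L, s.pc u = PC.remainder ∧
      s' = ⟨Function.update s.Tail L (some u), s.Grant,
        Function.update s.pc u (if s.Tail L = none then .crit else .entrySpin),
        Function.update s.lk u (some L), Function.update s.pred u (s.Tail L)⟩) ∨
    (∃ p L, s.pc u = PC.entrySpin ∧ s.pred u = some p ∧ s.lk u = some L ∧ s.Grant p = some L ∧
      s' = ⟨s.Tail, Function.update s.Grant p none, Function.update s.pc u PC.crit, s.lk, s.pred⟩) ∨
    (s.pc u = PC.crit ∧ s' = ⟨s.Tail, s.Grant, Function.update s.pc u PC.exitCAS, s.lk, s.pred⟩) ∨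
    (∃ L, s.pc u = PC.exitCAS ∧ s.lk u = some L ∧ s.Tail L = some u ∧
      s' = ⟨Function.update s.Tail L none, s.Grant, Function.update s.pc u PC.remainder,
        Function.update s.lk u none, s.pred⟩) ∨
    (∃ L, s.pc u = PC.exitCAS ∧ s.lk u = some L ∧ s.Tail L ≠ some u ∧
      s' = ⟨s.Tail, s.Grant, Function.update s.pc u PC.exitDoor, s.lk, s.pred⟩) ∨
    (∃ L, s.pc u = PC.exitDoor ∧ s.lk u = some L ∧
      s' = ⟨s.Tail, Function.update s.Grant u (some L), Function.update s.pc u PC.exitSpin,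
        s.lk, s.pred⟩) ∨
    (s.pc u = PC.exitSpin ∧ s.Grant u = none ∧
      s' = ⟨s.Tail, s.Grant, Function.update s.pc u PC.remainder,
        Function.update s.lk u none, s.pred⟩) := by
  cases h with
  | remainderStay h => exact Or.inl rfl
  | doorstep L h => exact Or.inr (Or.inl ⟨L, h, rfl⟩)
  | spinWait p L h hp hl hg => exact Or.inl rfl
  | spinAcquire p L h hp hl hg => exact Or.inr (Or.inr (Or.inl ⟨p, L, h, hp, hl, hg, rfl⟩))
  | critStay h => exact Or.inl rfl
  | exitStart h => exact Or.inr (Or.inr (Or.inr (Or.inl ⟨h, rfl⟩)))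
  | casSucc L h hl ht =>
      exact Or.inr (Or.inr (Or.inr (Or.inr (Or.inl ⟨L, h, hl, ht, rfl⟩))))
  | casFail L h hl ht =>
      exact Or.inr (Or.inr (Or.inr (Or.inr (Or.inr (Or.inl ⟨L, h, hl, ht, rfl⟩)))))
  | exitDoorstep L h hl =>
      exact Or.inr (Or.inr (Or.inr (Or.inr (Or.inr (Or.inr (Or.inl ⟨L, h, hl, rfl⟩))))))
  | exitSpinWait h hg => exact Or.inl rfl
  | exitDone h hg =>
      exact Or.inr (Or.inr (Or.inr (Or.inr (Or.inr (Or.inr (Or.inr ⟨h, hg, rfl⟩))))))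

/-- The queue of a lock, as a history variable computed from one transition. -/
private def Qstep (s s' : St Thread Lock) (u : Thread) (L : Lock) (q : List Thread) :
    List Thread :=
  if s.pc u = PC.remainder ∧ s'.pc u ≠ PC.remainder ∧ s'.lk u = some L then q ++ [u]
  else if (s.pc u = PC.entrySpin ∧ s.lk u = some L ∧ s'.pc u = PC.crit) ∨
      (s.pc u = PC.exitCAS ∧ s.lk u = some L ∧ s'.pc u = PC.remainder) then q.tail
  else q

/-- The queue of each lock along an execution. -/
private def Q (E : Execution Thread Lock) : ℕ → Lock → List Thread
  | 0, _ => []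
  | n + 1, L => Qstep (E.states n) (E.states (n + 1)) (E.sched n) L (Q E n L)

/-- The master invariant. -/
private structure Inv (E : Execution Thread Lock) (n : ℕ) : Prop where
  tail_eq : ∀ L, (E.states n).Tail L = (Q E n L).getLast?
  nodup : ∀ L, (Q E n L).Nodup
  mem_lk : ∀ L t, t ∈ Q E n L → (E.states n).lk t = some L
  head_pc : ∀ L h rest, Q E n L = h :: rest →
    (E.states n).pc h = PC.crit ∨ (E.states n).pc h = PC.exitCAS ∨
    (E.states n).pc h = PC.exitDoor ∨ (E.states n).pc h = PC.exitSpin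
  chain : ∀ L, (Q E n L).Chain' (fun a b => (E.states n).pred b = some a)
  rest_pc : ∀ L h rest, Q E n L = h :: rest → ∀ t ∈ rest, (E.states n).pc t = PC.entrySpin
  head_grant : ∀ L h rest, Q E n L = h :: rest → (E.states n).pc h = PC.exitSpin →
    (E.states n).Grant h = some L
  entry_mem : ∀ L t, (E.states n).pc t = PC.entrySpin → (E.states n).lk t = some L →
    t ∈ Q E n L
  grant_inv : ∀ w L', (E.states n).Grant w = some L' →
    (E.states n).pc w = PC.exitSpin ∧ (E.states n).lk w = some L'

private theorem inv_zero (E : Execution Thread Lock) : Inv E 0 := by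
  have h : E.states 0 = initSt := E.init
  constructor <;> simp [Q, h, initSt, List.Chain']

private theorem hQ_succ (E : Execution Thread Lock) (n : ℕ) (L : Lock) :
    Q E (n+1) L = Qstep (E.states n) (E.states (n+1)) (E.sched n) L (Q E n L) := rfl

private theorem inv_pconly (E : Execution Thread Lock) (n : ℕ) (hI : Inv E n) {c : PC}
    (hs : E.states (n+1) = ⟨(E.states n).Tail, (E.states n).Grant,
      Function.update (E.states n).pc (E.sched n) c, (E.states n).lk, (E.states n).pred⟩)
    (h0a : (E.states n).pc (E.sched n) ≠ PC.remainder)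
    (h0b : (E.states n).pc (E.sched n) ≠ PC.entrySpin)
    (h0c : (E.states n).pc (E.sched n) ≠ PC.exitSpin)
    (hca : c = PC.exitCAS ∨ c = PC.exitDoor) : Inv E (n+1) := by
  have hT' : (E.states (n+1)).Tail = (E.states n).Tail := by rw [hs]
  have hG' : (E.states (n+1)).Grant = (E.states n).Grant := by rw [hs]
  have hL' : (E.states (n+1)).lk = (E.states n).lk := by rw [hs]
  have hP' : (E.states (n+1)).pred = (E.states n).pred := by rw [hs]
  have hpc'u : (E.states (n+1)).pc (E.sched n) = c := by rw [hs]; simp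
  have hpc'o : ∀ t, t ≠ E.sched n → (E.states (n+1)).pc t = (E.states n).pc t := by
    intro t ht; rw [hs]; simp [Function.update_of_ne ht]
  have hQ : ∀ L, Q E (n+1) L = Q E n L := by
    intro L
    rw [hQ_succ E n L, Qstep, if_neg, if_neg]
    · rintro (⟨h1, _, _⟩ | ⟨h1, _, h3⟩)
      · exact h0b h1
      · rw [hpc'u] at h3
        rcases hca with rfl | rfl <;> cases h3
    · rintro ⟨h1, _, _⟩; exact h0a h1
  constructor
  · intro L; rw [hT', hQ]; exact hI.tail_eq L
  · intro L; rw [hQ]; exact hI.nodup L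
  · intro L t ht; rw [hL']; exact hI.mem_lk L t (by rwa [hQ] at ht)
  · intro L h rest hq
    rw [hQ] at hq
    by_cases hhu : h = E.sched n
    · subst hhu
      rw [hpc'u]
      rcases hca with rfl | rfl <;> simp
    · rw [hpc'o h hhu]; exact hI.head_pc L h rest hq
  · intro L; rw [hQ]; simp only [hP']; exact hI.chain L
  · intro L h rest hq t htr
    rw [hQ] at hq
    have htne : t ≠ E.sched n := by
      intro he
      have := hI.rest_pc L h rest hq t htr
      rw [he] at this; exact h0b this
    rw [hpc'o t htne]
    exact hI.rest_pc L h rest hq t htr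
  · intro L h rest hq hpc
    rw [hQ] at hq
    have hhu : h ≠ E.sched n := by
      intro he
      rw [he, hpc'u] at hpc
      rcases hca with rfl | rfl <;> cases hpc
    rw [hpc'o h hhu] at hpc
    rw [hG']
    exact hI.head_grant L h rest hq hpc
  · intro L t hpc hlk
    have htne : t ≠ E.sched n := by
      intro he
      rw [he, hpc'u] at hpc
      rcases hca with rfl | rfl <;> cases hpc
    rw [hpc'o t htne] at hpc
    rw [hL'] at hlk
    rw [hQ]
    exact hI.entry_mem L t hpc hlk
  · intro w L' hg
    rw [hG'] at hg
    have hold := hI.grant_inv w L' hg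
    have hwu : w ≠ E.sched n := by
      intro he; rw [he] at hold; exact h0c hold.1
    rw [hpc'o w hwu, hL']
    exact hold

private theorem mem_pc_ne (E : Execution Thread Lock) (n : ℕ) (hI : Inv E n) {L : Lock}
    {t : Thread} (ht : t ∈ Q E n L) : (E.states n).pc t ≠ PC.remainder := by
  rcases hq : Q E n L with _ | ⟨h, rest⟩
  · rw [hq] at ht; cases ht
  · rw [hq] at ht
    rcases List.mem_cons.1 ht with rfl | h'
    · rcases hI.head_pc L t rest hq with h | h | h | h <;> simp [h]
    · simp [hI.rest_pc L h rest hq t h']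

private theorem inv_transport (E : Execution Thread Lock) (n : ℕ)
    (hs : E.states (n+1) = E.states n) (hQ : ∀ L, Q E (n+1) L = Q E n L) (hI : Inv E n) :
    Inv E (n+1) where
  tail_eq L := by rw [hs, hQ]; exact hI.tail_eq L
  nodup L := by rw [hQ]; exact hI.nodup L
  mem_lk L t ht := by rw [hs]; exact hI.mem_lk L t (hQ L ▸ ht)
  head_pc L h rest hq := by rw [hs]; exact hI.head_pc L h rest ((hQ L).symm.trans hq)
  chain L := by rw [hQ]; simp only [hs]; exact hI.chain L
  rest_pc L h rest hq t htr := by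
    rw [hs]; exact hI.rest_pc L h rest ((hQ L).symm.trans hq) t htr
  head_grant L h rest hq hpc := by
    rw [hs]
    exact hI.head_grant L h rest ((hQ L).symm.trans hq) (by rw [hs] at hpc; exact hpc)
  entry_mem L t hpc hlk := by
    rw [hQ]
    exact hI.entry_mem L t (by rw [hs] at hpc; exact hpc) (by rw [hs] at hlk; exact hlk)
  grant_inv w L' hg := by rw [hs] at hg ⊢; exact hI.grant_inv w L' hg

/-- Shape of the queue when a thread is ready to acquire. -/
private theorem acquire_shape (E : Execution Thread Lock) (n : ℕ) (hI : Inv E n)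
    {u p : Thread} {L : Lock} (hpc : (E.states n).pc u = PC.entrySpin)
    (hlk : (E.states n).lk u = some L) (hpred : (E.states n).pred u = some p)
    (hg : (E.states n).Grant p = some L) :
    ∃ r, Q E n L = p :: u :: r ∧ (E.states n).pc p = PC.exitSpin := by
  have hppc : (E.states n).pc p = PC.exitSpin := (hI.grant_inv p L hg).1
  have hmem : u ∈ Q E n L := hI.entry_mem L u hpc hlk
  rcases chain'MemCases (hI.chain L) hmem with ⟨l', hl'⟩ | ⟨b, l1, l2, hq, hR⟩
  · rcases hI.head_pc L u l' hl' with h' | h' | h' | h' <;> rw [hpc] at h' <;> cases h'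
  · have hbp : p = b := by
      rw [hpred] at hR; exact Option.some_inj.1 hR
    rw [← hbp] at hq hR
    rcases l1 with _ | ⟨x, l1'⟩
    · exact ⟨l2, hq, hppc⟩
    · exfalso
      have : p ∈ l1' ++ p :: u :: l2 := by simp
      have := hI.rest_pc L x (l1' ++ p :: u :: l2) (by simpa using hq) p this
      rw [hppc] at this; cases this

private theorem inv_succ (E : Execution Thread Lock) (n : ℕ) (hI : Inv E n) : Inv E (n + 1) := by
  have hQdef : ∀ L, Q E (n+1) L = Qstep (E.states n) (E.states (n+1)) (E.sched n) L (Q E n L) :=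
    fun _ => rfl
  rcases step_cases (E.steps n) with hs | ⟨L0, h0, hs⟩ | ⟨p, L0, h0, hp0, hl0, hg0, hs⟩ |
      ⟨h0, hs⟩ | ⟨L0, h0, hl0, ht0, hs⟩ | ⟨L0, h0, hl0, ht0, hs⟩ | ⟨L0, h0, hl0, hs⟩ |
      ⟨h0, hg0, hs⟩
  · -- identity step
    have hQ : ∀ L, Q E (n+1) L = Q E n L := by
      intro L
      rw [hQdef, Qstep, if_neg, if_neg]
      · rintro (⟨h1, _, h3⟩ | ⟨h1, _, h3⟩) <;> rw [hs, h1] at h3 <;> cases h3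
      · rintro ⟨h1, h2, _⟩; rw [hs] at h2; exact h2 h1
    exact inv_transport E n hs hQ hI
  · -- entry doorstep on L0
    have hpc'u : (E.states (n+1)).pc (E.sched n) =
        (if (E.states n).Tail L0 = none then PC.crit else PC.entrySpin) := by rw [hs]; simp
    have hlk'u : (E.states (n+1)).lk (E.sched n) = some L0 := by rw [hs]; simp
    have hpred'u : (E.states (n+1)).pred (E.sched n) = (E.states n).Tail L0 := by rw [hs]; simp
    have hG' : (E.states (n+1)).Grant = (E.states n).Grant := by rw [hs]
    have hpc'o : ∀ t, t ≠ E.sched n → (E.states (n+1)).pc t = (E.states n).pc t := by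
      intro t ht; rw [hs]; simp [Function.update_of_ne ht]
    have hlk'o : ∀ t, t ≠ E.sched n → (E.states (n+1)).lk t = (E.states n).lk t := by
      intro t ht; rw [hs]; simp [Function.update_of_ne ht]
    have hpred'o : ∀ t, t ≠ E.sched n → (E.states (n+1)).pred t = (E.states n).pred t := by
      intro t ht; rw [hs]; simp [Function.update_of_ne ht]
    have huQ : ∀ L, E.sched n ∉ Q E n L := fun L hm => (mem_pc_ne E n hI hm) h0
    have hiff : (E.states n).Tail L0 = none ↔ Q E n L0 = [] := by
      rw [hI.tail_eq]; exact List.getLast?_eq_none_iff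
    have hQL0 : Q E (n+1) L0 = Q E n L0 ++ [E.sched n] := by
      rw [hQdef, Qstep, if_pos]
      refine ⟨h0, ?_, hlk'u⟩
      rw [hpc'u]; split <;> simp
    have hQoth : ∀ L, L0 ≠ L → Q E (n+1) L = Q E n L := by
      intro L hL
      rw [hQdef, Qstep, if_neg, if_neg]
      · rintro (⟨h1, _, _⟩ | ⟨h1, _, _⟩) <;> rw [h0] at h1 <;> cases h1
      · rintro ⟨_, _, h3⟩
        rw [hlk'u] at h3
        exact hL (Option.some_inj.1 h3)
    constructor
    · -- tail_eq
      intro L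
      by_cases hL : L0 = L
      · subst hL
        rw [hQL0, List.getLast?_concat, hs]
        simp
      · rw [hQoth L hL, hs]
        simp only [Function.update_of_ne (Ne.symm hL)]
        exact hI.tail_eq L
    · -- nodup
      intro L
      by_cases hL : L0 = L
      · subst hL
        rw [hQL0]
        simp [List.nodup_append, hI.nodup L0, huQ L0]
        exact fun a ha he => huQ L0 (he ▸ ha)
      · rw [hQoth L hL]; exact hI.nodup L
    · -- mem_lk
      intro L t ht
      by_cases hL : L0 = L
      · subst hL
        rw [hQL0] at ht
        rcases List.mem_append.1 ht with h' | h'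
        · have htu : t ≠ E.sched n := fun he => huQ L0 (he ▸ h')
          rw [hlk'o t htu]; exact hI.mem_lk L0 t h'
        · have : t = E.sched n := by simpa using h'
          rw [this]; exact hlk'u
      · rw [hQoth L hL] at ht
        have htu : t ≠ E.sched n := fun he => huQ L (he ▸ ht)
        rw [hlk'o t htu]; exact hI.mem_lk L t ht
    · -- head_pc
      intro L h rest hq
      by_cases hL : L0 = L
      · subst hL
        rw [hQL0] at hq
        rcases hq0 : Q E n L0 with _ | ⟨h1, tl⟩
        · rw [hq0] at hq
          simp at hq
          obtain ⟨rfl, rfl⟩ := hq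
          left
          rw [hpc'u, if_pos (hiff.2 hq0)]
        · rw [hq0] at hq
          have hh : h = h1 := by
            have h' := congrArg (fun l => l.head?) hq
            simp at h'
            exact h'.symm
          subst hh
          have htu : h ≠ E.sched n := fun he =>
            huQ L0 (by rw [hq0, ← he]; exact List.mem_cons_self)
          rw [hpc'o h htu]
          exact hI.head_pc L0 h tl hq0
      · rw [hQoth L hL] at hq
        have htu : h ≠ E.sched n := fun he =>
          huQ L (by rw [hq, ← he]; exact List.mem_cons_self)
        rw [hpc'o h htu]
        exact hI.head_pc L h _ hq
    · -- chain
      intro L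
      by_cases hL : L0 = L
      · subst hL
        rw [hQL0]
        simp only [List.Chain']
        rw [List.isChain_append]
        refine ⟨?_, List.isChain_singleton _, ?_⟩
        · refine chain'OfMemImp (fun a b hb hR => ?_) (hI.chain L0)
          have hbu : b ≠ E.sched n := fun he => huQ L0 (he ▸ hb)
          rw [hpred'o b hbu]; exact hR
        · intro x hx y hy
          simp at hy
          subst hy
          rw [hpred'u, hI.tail_eq L0]
          exact hx
      · rw [hQoth L hL]
        refine chain'OfMemImp (fun a b hb hR => ?_) (hI.chain L)
        have hbu : b ≠ E.sched n := fun he => huQ L (he ▸ hb)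
        rw [hpred'o b hbu]; exact hR
    · -- rest_pc
      intro L h rest hq t htr
      by_cases hL : L0 = L
      · subst hL
        rcases hq0 : Q E n L0 with _ | ⟨h1, tl⟩
        · rw [hQL0, hq0] at hq
          simp at hq
          rw [hq.2] at htr; cases htr
        · rw [hQL0, hq0] at hq
          have hh : h = h1 ∧ rest = tl ++ [E.sched n] := by
            have h' := hq
            simp at h'
            exact ⟨h'.1.symm, h'.2.symm⟩
          rcases List.mem_append.1 (hh.2 ▸ htr) with h' | h'
          · have htu : t ≠ E.sched n := fun he =>
              huQ L0 (by rw [hq0, ← he]; exact List.mem_cons_of_mem h1 h')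
            rw [hpc'o t htu]
            exact hI.rest_pc L0 h1 tl hq0 t h'
          · have : t = E.sched n := by simpa using h'
            rw [this, hpc'u, if_neg]
            intro hT
            rw [hiff.1 hT] at hq0; cases hq0
      · rw [hQoth L hL] at hq
        have htu : t ≠ E.sched n := fun he =>
          huQ L (by rw [hq, ← he]; exact List.mem_cons_of_mem h htr)
        rw [hpc'o t htu]
        exact hI.rest_pc L h rest hq t htr
    · -- head_grant
      intro L h rest hq hpc
      by_cases hL : L0 = L
      · subst hL
        rcases hq0 : Q E n L0 with _ | ⟨h1, tl⟩
        · rw [hQL0, hq0] at hq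
          simp at hq
          obtain ⟨rfl, rfl⟩ := hq
          rw [hpc'u, if_pos (hiff.2 hq0)] at hpc
          cases hpc
        · rw [hQL0, hq0] at hq
          have hh : h = h1 := by
            have h' := congrArg (fun l => l.head?) hq
            simp at h'
            exact h'.symm
          subst hh
          have htu : h ≠ E.sched n := fun he =>
            huQ L0 (by rw [hq0, ← he]; exact List.mem_cons_self)
          rw [hpc'o h htu] at hpc
          rw [hG']
          exact hI.head_grant L0 h tl hq0 hpc
      · rw [hQoth L hL] at hq
        have htu : h ≠ E.sched n := fun he =>
          huQ L (by rw [hq, ← he]; exact List.mem_cons_self)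
        rw [hpc'o h htu] at hpc
        rw [hG']
        exact hI.head_grant L h _ hq hpc
    · -- entry_mem
      intro L t hpc hlk
      by_cases htu : t = E.sched n
      · subst htu
        have hLL0 : L0 = L := by
          rw [hlk'u] at hlk; exact Option.some_inj.1 hlk
        subst hLL0
        rw [hQL0]; simp
      · rw [hpc'o t htu] at hpc
        rw [hlk'o t htu] at hlk
        have := hI.entry_mem L t hpc hlk
        by_cases hL : L0 = L
        · subst hL; rw [hQL0]; exact List.mem_append_left _ this
        · rw [hQoth L hL]; exact this
    · -- grant_inv
      intro w L' hg
      rw [hG'] at hg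
      have hold := hI.grant_inv w L' hg
      have hwu : w ≠ E.sched n := by
        intro he; rw [he, h0] at hold; cases hold.1
      rw [hpc'o w hwu, hlk'o w hwu]
      exact hold
  · -- spinAcquire
    have hT' : (E.states (n+1)).Tail = (E.states n).Tail := by rw [hs]
    have hL' : (E.states (n+1)).lk = (E.states n).lk := by rw [hs]
    have hP' : (E.states (n+1)).pred = (E.states n).pred := by rw [hs]
    have hpc'u : (E.states (n+1)).pc (E.sched n) = PC.crit := by rw [hs]; simp
    have hpc'o : ∀ t, t ≠ E.sched n → (E.states (n+1)).pc t = (E.states n).pc t := by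
      intro t ht; rw [hs]; simp [Function.update_of_ne ht]
    have hg'p : (E.states (n+1)).Grant p = none := by rw [hs]; simp
    have hg'o : ∀ w, w ≠ p → (E.states (n+1)).Grant w = (E.states n).Grant w := by
      intro w hw; rw [hs]; simp [Function.update_of_ne hw]
    have hppc : (E.states n).pc p = PC.exitSpin := (hI.grant_inv p L0 hg0).1
    have hplk : (E.states n).lk p = some L0 := (hI.grant_inv p L0 hg0).2
    obtain ⟨r2, hq0, -⟩ := acquire_shape E n hI h0 hl0 hp0 hg0
    have hnd0 := hI.nodup L0
    rw [hq0] at hnd0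
    have hQL0 : Q E (n+1) L0 = E.sched n :: r2 := by
      rw [hQ_succ, Qstep, if_neg, if_pos (Or.inl ⟨h0, hl0, hpc'u⟩)]
      · rw [hq0]; rfl
      · rintro ⟨h1, _, _⟩; rw [h0] at h1; cases h1
    have hQoth : ∀ L, L0 ≠ L → Q E (n+1) L = Q E n L := by
      intro L hL
      rw [hQ_succ, Qstep, if_neg, if_neg]
      · rintro (⟨_, h2, _⟩ | ⟨h1, _, _⟩)
        · rw [hl0] at h2; exact hL (Option.some_inj.1 h2)
        · rw [h0] at h1; cases h1
      · rintro ⟨h1, _, _⟩; rw [h0] at h1; cases h1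
    have huoth : ∀ L, L0 ≠ L → E.sched n ∉ Q E n L := by
      intro L hL hm
      have := hI.mem_lk L _ hm
      rw [hl0] at this
      exact hL (Option.some_inj.1 this)
    have hpoth : ∀ L, L0 ≠ L → p ∉ Q E n L := by
      intro L hL hm
      have := hI.mem_lk L _ hm
      rw [hplk] at this
      exact hL (Option.some_inj.1 this)
    constructor
    · intro L
      by_cases hL : L0 = L
      · subst hL
        rw [hT', hQL0, hI.tail_eq L0, hq0, List.getLast?_cons_cons]
      · rw [hT', hQoth L hL]; exact hI.tail_eq L
    · intro L
      by_cases hL : L0 = L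
      · subst hL; rw [hQL0]; exact (List.nodup_cons.1 hnd0).2
      · rw [hQoth L hL]; exact hI.nodup L
    · intro L t ht
      rw [hL']
      by_cases hL : L0 = L
      · subst hL
        rw [hQL0] at ht
        exact hI.mem_lk L0 t (by rw [hq0]; exact List.mem_cons_of_mem p ht)
      · exact hI.mem_lk L t (by rwa [hQoth L hL] at ht)
    · intro L h rest hq
      by_cases hL : L0 = L
      · subst hL
        rw [hQL0] at hq
        injection hq with hh hr
        left
        rw [← hh, hpc'u]
      · rw [hQoth L hL] at hq
        have hhu : h ≠ E.sched n := fun he =>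
          huoth L hL (by rw [hq, ← he]; exact List.mem_cons_self)
        rw [hpc'o h hhu]
        exact hI.head_pc L h rest hq
    · intro L
      simp only [hP']
      by_cases hL : L0 = L
      · subst hL
        rw [hQL0]
        have hch := hI.chain L0
        rw [hq0] at hch
        exact hch.tail
      · rw [hQoth L hL]; exact hI.chain L
    · intro L h rest hq t htr
      by_cases hL : L0 = L
      · subst hL
        rw [hQL0] at hq
        injection hq with hh hr
        have htr2 : t ∈ r2 := by rw [hr]; exact htr
        have htu : t ≠ E.sched n := by
          intro he
          exact (List.nodup_cons.1 (List.nodup_cons.1 hnd0).2).1 (he ▸ htr2)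
        rw [hpc'o t htu]
        exact hI.rest_pc L0 p (E.sched n :: r2) hq0 t (List.mem_cons_of_mem _ htr2)
      · rw [hQoth L hL] at hq
        have htu : t ≠ E.sched n := fun he =>
          huoth L hL (by rw [hq, ← he]; exact List.mem_cons_of_mem h htr)
        rw [hpc'o t htu]
        exact hI.rest_pc L h rest hq t htr
    · intro L h rest hq hpc
      by_cases hL : L0 = L
      · subst hL
        rw [hQL0] at hq
        injection hq with hh hr
        rw [← hh, hpc'u] at hpc
        cases hpc
      · rw [hQoth L hL] at hq
        have hhu : h ≠ E.sched n := fun he =>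
          huoth L hL (by rw [hq, ← he]; exact List.mem_cons_self)
        rw [hpc'o h hhu] at hpc
        have hhp : h ≠ p := fun he =>
          hpoth L hL (by rw [hq, ← he]; exact List.mem_cons_self)
        rw [hg'o h hhp]
        exact hI.head_grant L h rest hq hpc
    · intro L t hpc hlk
      have htu : t ≠ E.sched n := by
        intro he; rw [he, hpc'u] at hpc; cases hpc
      rw [hpc'o t htu] at hpc
      rw [hL'] at hlk
      have hmem := hI.entry_mem L t hpc hlk
      by_cases hL : L0 = L
      · subst hL
        rw [hQL0]
        rw [hq0] at hmem
        rcases List.mem_cons.1 hmem with rfl | h'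
        · rw [hppc] at hpc; cases hpc
        · exact h'
      · rw [hQoth L hL]; exact hmem
    · intro w L' hg
      have hwp : w ≠ p := by
        intro he; rw [he, hg'p] at hg; cases hg
      rw [hg'o w hwp] at hg
      have hold := hI.grant_inv w L' hg
      have hwu : w ≠ E.sched n := by
        intro he; rw [he, h0] at hold; cases hold.1
      rw [hpc'o w hwu, hL']
      exact hold
  · -- exitStart
    exact inv_pconly E n hI hs (by rw [h0]; simp) (by rw [h0]; simp) (by rw [h0]; simp)
      (Or.inl rfl)
  · -- casSucc
    have hG' : (E.states (n+1)).Grant = (E.states n).Grant := by rw [hs]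
    have hP' : (E.states (n+1)).pred = (E.states n).pred := by rw [hs]
    have hpc'u : (E.states (n+1)).pc (E.sched n) = PC.remainder := by rw [hs]; simp
    have hpc'o : ∀ t, t ≠ E.sched n → (E.states (n+1)).pc t = (E.states n).pc t := by
      intro t ht; rw [hs]; simp [Function.update_of_ne ht]
    have hlk'o : ∀ t, t ≠ E.sched n → (E.states (n+1)).lk t = (E.states n).lk t := by
      intro t ht; rw [hs]; simp [Function.update_of_ne ht]
    have hT'0 : (E.states (n+1)).Tail L0 = none := by rw [hs]; simp
    have hT'o : ∀ L, L ≠ L0 → (E.states (n+1)).Tail L = (E.states n).Tail L := by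
      intro L hL; rw [hs]; simp [Function.update_of_ne hL]
    have hlast : (Q E n L0).getLast? = some (E.sched n) := by rw [← hI.tail_eq]; exact ht0
    have hq0 : Q E n L0 = [E.sched n] := by
      rcases hq : Q E n L0 with _ | ⟨h1, tl⟩
      · rw [hq] at hlast; cases hlast
      · rcases htl : tl with _ | ⟨x, xs⟩
        · rw [hq, htl] at hlast
          simp at hlast
          rw [hlast]
        · exfalso
          rw [hq, htl, List.getLast?_cons_cons] at hlast
          have hu' : E.sched n ∈ x :: xs := memOfGetLast? hlast
          have hpcu := hI.rest_pc L0 h1 tl hq (E.sched n) (by rw [htl]; exact hu')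
          rw [h0] at hpcu; cases hpcu
    have hQL0 : Q E (n+1) L0 = [] := by
      rw [hQ_succ, Qstep, if_neg, if_pos (Or.inr ⟨h0, hl0, hpc'u⟩), hq0]
      · rfl
      · rintro ⟨h1, _, _⟩; rw [h0] at h1; cases h1
    have hQoth : ∀ L, L0 ≠ L → Q E (n+1) L = Q E n L := by
      intro L hL
      rw [hQ_succ, Qstep, if_neg, if_neg]
      · rintro (⟨h1, _, _⟩ | ⟨_, h2, _⟩)
        · rw [h0] at h1; cases h1
        · rw [hl0] at h2; exact hL (Option.some_inj.1 h2)
      · rintro ⟨h1, _, _⟩; rw [h0] at h1; cases h1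
    have huoth : ∀ L, L0 ≠ L → E.sched n ∉ Q E n L := by
      intro L hL hm
      have := hI.mem_lk L _ hm
      rw [hl0] at this
      exact hL (Option.some_inj.1 this)
    constructor
    · intro L
      by_cases hL : L0 = L
      · subst hL; rw [hT'0, hQL0]; rfl
      · rw [hT'o L (Ne.symm hL), hQoth L hL]; exact hI.tail_eq L
    · intro L
      by_cases hL : L0 = L
      · subst hL; rw [hQL0]; exact List.nodup_nil
      · rw [hQoth L hL]; exact hI.nodup L
    · intro L t ht
      by_cases hL : L0 = L
      · subst hL; rw [hQL0] at ht; cases ht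
      · rw [hQoth L hL] at ht
        have htu : t ≠ E.sched n := fun he => huoth L hL (he ▸ ht)
        rw [hlk'o t htu]
        exact hI.mem_lk L t ht
    · intro L h rest hq
      by_cases hL : L0 = L
      · subst hL; rw [hQL0] at hq; cases hq
      · rw [hQoth L hL] at hq
        have hhu : h ≠ E.sched n := fun he =>
          huoth L hL (by rw [hq, ← he]; exact List.mem_cons_self)
        rw [hpc'o h hhu]
        exact hI.head_pc L h rest hq
    · intro L
      simp only [hP']
      by_cases hL : L0 = L
      · subst hL; rw [hQL0]; exact List.isChain_nil
      · rw [hQoth L hL]; exact hI.chain L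
    · intro L h rest hq t htr
      by_cases hL : L0 = L
      · subst hL; rw [hQL0] at hq; cases hq
      · rw [hQoth L hL] at hq
        have htu : t ≠ E.sched n := fun he =>
          huoth L hL (by rw [hq, ← he]; exact List.mem_cons_of_mem h htr)
        rw [hpc'o t htu]
        exact hI.rest_pc L h rest hq t htr
    · intro L h rest hq hpc
      by_cases hL : L0 = L
      · subst hL; rw [hQL0] at hq; cases hq
      · rw [hQoth L hL] at hq
        have hhu : h ≠ E.sched n := fun he =>
          huoth L hL (by rw [hq, ← he]; exact List.mem_cons_self)
        rw [hpc'o h hhu] at hpc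
        rw [hG']
        exact hI.head_grant L h rest hq hpc
    · intro L t hpc hlk
      have htu : t ≠ E.sched n := by
        intro he; rw [he, hpc'u] at hpc; cases hpc
      rw [hpc'o t htu] at hpc
      rw [hlk'o t htu] at hlk
      have hmem := hI.entry_mem L t hpc hlk
      by_cases hL : L0 = L
      · subst hL
        rw [hq0] at hmem
        simp at hmem
        exact absurd hmem htu
      · rw [hQoth L hL]; exact hmem
    · intro w L' hg
      rw [hG'] at hg
      have hold := hI.grant_inv w L' hg
      have hwu : w ≠ E.sched n := by
        intro he; rw [he, h0] at hold; cases hold.1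
      rw [hpc'o w hwu, hlk'o w hwu]
      exact hold
  · -- casFail
    exact inv_pconly E n hI hs (by rw [h0]; simp) (by rw [h0]; simp) (by rw [h0]; simp)
      (Or.inr rfl)
  · -- exit doorstep
    have hT' : (E.states (n+1)).Tail = (E.states n).Tail := by rw [hs]
    have hL' : (E.states (n+1)).lk = (E.states n).lk := by rw [hs]
    have hP' : (E.states (n+1)).pred = (E.states n).pred := by rw [hs]
    have hpc'u : (E.states (n+1)).pc (E.sched n) = PC.exitSpin := by rw [hs]; simp
    have hpc'o : ∀ t, t ≠ E.sched n → (E.states (n+1)).pc t = (E.states n).pc t := by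
      intro t ht; rw [hs]; simp [Function.update_of_ne ht]
    have hg'u : (E.states (n+1)).Grant (E.sched n) = some L0 := by rw [hs]; simp
    have hg'o : ∀ w, w ≠ E.sched n → (E.states (n+1)).Grant w = (E.states n).Grant w := by
      intro w hw; rw [hs]; simp [Function.update_of_ne hw]
    have hQ : ∀ L, Q E (n+1) L = Q E n L := by
      intro L
      rw [hQ_succ, Qstep, if_neg, if_neg]
      · rintro (⟨h1, _, _⟩ | ⟨h1, _, _⟩) <;> rw [h0] at h1 <;> cases h1
      · rintro ⟨h1, _, _⟩; rw [h0] at h1; cases h1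
    constructor
    · intro L; rw [hT', hQ]; exact hI.tail_eq L
    · intro L; rw [hQ]; exact hI.nodup L
    · intro L t ht; rw [hL']; exact hI.mem_lk L t (by rwa [hQ] at ht)
    · intro L h rest hq
      rw [hQ] at hq
      by_cases hhu : h = E.sched n
      · subst hhu; rw [hpc'u]; simp
      · rw [hpc'o h hhu]; exact hI.head_pc L h rest hq
    · intro L; rw [hQ]; simp only [hP']; exact hI.chain L
    · intro L h rest hq t htr
      rw [hQ] at hq
      have htu : t ≠ E.sched n := by
        intro he
        have := hI.rest_pc L h rest hq t htr
        rw [he, h0] at this; cases this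
      rw [hpc'o t htu]
      exact hI.rest_pc L h rest hq t htr
    · intro L h rest hq hpc
      rw [hQ] at hq
      by_cases hhu : h = E.sched n
      · subst hhu
        rw [hg'u]
        have := hI.mem_lk L _ (by rw [hq]; exact List.mem_cons_self)
        rw [hl0] at this
        exact this
      · rw [hpc'o h hhu] at hpc
        rw [hg'o h hhu]
        exact hI.head_grant L h rest hq hpc
    · intro L t hpc hlk
      have htu : t ≠ E.sched n := by
        intro he; rw [he, hpc'u] at hpc; cases hpc
      rw [hpc'o t htu] at hpc
      rw [hL'] at hlk
      rw [hQ]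
      exact hI.entry_mem L t hpc hlk
    · intro w L' hg
      by_cases hwu : w = E.sched n
      · subst hwu
        rw [hg'u] at hg
        refine ⟨by rw [hpc'u], ?_⟩
        rw [hL', hl0]
        exact hg
      · rw [hg'o w hwu] at hg
        have hold := hI.grant_inv w L' hg
        rw [hpc'o w hwu, hL']
        exact hold
  · -- exit done
    have hT' : (E.states (n+1)).Tail = (E.states n).Tail := by rw [hs]
    have hG' : (E.states (n+1)).Grant = (E.states n).Grant := by rw [hs]
    have hP' : (E.states (n+1)).pred = (E.states n).pred := by rw [hs]
    have hpc'u : (E.states (n+1)).pc (E.sched n) = PC.remainder := by rw [hs]; simp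
    have hpc'o : ∀ t, t ≠ E.sched n → (E.states (n+1)).pc t = (E.states n).pc t := by
      intro t ht; rw [hs]; simp [Function.update_of_ne ht]
    have hlk'o : ∀ t, t ≠ E.sched n → (E.states (n+1)).lk t = (E.states n).lk t := by
      intro t ht; rw [hs]; simp [Function.update_of_ne ht]
    have huq : ∀ L, E.sched n ∉ Q E n L := by
      intro L hm
      rcases hq : Q E n L with _ | ⟨h1, tl⟩
      · rw [hq] at hm; cases hm
      · rw [hq] at hm
        rcases List.mem_cons.1 hm with he | h'
        · have := hI.head_grant L h1 tl hq (by rw [← he]; exact h0)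
          rw [← he, hg0] at this; cases this
        · have := hI.rest_pc L h1 tl hq _ h'
          rw [h0] at this; cases this
    have hQ : ∀ L, Q E (n+1) L = Q E n L := by
      intro L
      rw [hQ_succ, Qstep, if_neg, if_neg]
      · rintro (⟨h1, _, _⟩ | ⟨h1, _, _⟩) <;> rw [h0] at h1 <;> cases h1
      · rintro ⟨h1, _, _⟩; rw [h0] at h1; cases h1
    constructor
    · intro L; rw [hT', hQ]; exact hI.tail_eq L
    · intro L; rw [hQ]; exact hI.nodup L
    · intro L t ht
      rw [hQ] at ht
      have htu : t ≠ E.sched n := fun he => huq L (he ▸ ht)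
      rw [hlk'o t htu]
      exact hI.mem_lk L t ht
    · intro L h rest hq
      rw [hQ] at hq
      have hhu : h ≠ E.sched n := fun he =>
        huq L (by rw [hq, ← he]; exact List.mem_cons_self)
      rw [hpc'o h hhu]
      exact hI.head_pc L h rest hq
    · intro L; rw [hQ]; simp only [hP']; exact hI.chain L
    · intro L h rest hq t htr
      rw [hQ] at hq
      have htu : t ≠ E.sched n := fun he =>
        huq L (by rw [hq, ← he]; exact List.mem_cons_of_mem h htr)
      rw [hpc'o t htu]
      exact hI.rest_pc L h rest hq t htr
    · intro L h rest hq hpc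
      rw [hQ] at hq
      have hhu : h ≠ E.sched n := fun he =>
        huq L (by rw [hq, ← he]; exact List.mem_cons_self)
      rw [hpc'o h hhu] at hpc
      rw [hG']
      exact hI.head_grant L h rest hq hpc
    · intro L t hpc hlk
      have htu : t ≠ E.sched n := by
        intro he; rw [he, hpc'u] at hpc; cases hpc
      rw [hpc'o t htu] at hpc
      rw [hlk'o t htu] at hlk
      rw [hQ]
      exact hI.entry_mem L t hpc hlk
    · intro w L' hg
      rw [hG'] at hg
      have hwu : w ≠ E.sched n := by
        intro he; rw [he, hg0] at hg; cases hg
      have hold := hI.grant_inv w L' hg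
      rw [hpc'o w hwu, hlk'o w hwu]
      exact hold

private theorem inv_all (E : Execution Thread Lock) : ∀ n, Inv E n
  | 0 => inv_zero E
  | n + 1 => inv_succ E n (inv_all E n)

/-- Generic classification of how a queue changes in one step. -/
private theorem Q_succ_cases (E : Execution Thread Lock) (n : ℕ) (hI : Inv E n) (L : Lock) :
    (Q E (n+1) L = Q E n L) ∨
    (∃ u, E.sched n = u ∧ (E.states n).pc u = PC.remainder ∧
      Q E (n+1) L = Q E n L ++ [u]) ∨
    (∃ h tl, Q E n L = h :: tl ∧ Q E (n+1) L = tl ∧ (E.states n).pc h ≠ PC.entrySpin) := by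
  classical
  have hQ : Q E (n+1) L = Qstep (E.states n) (E.states (n+1)) (E.sched n) L (Q E n L) := rfl
  by_cases h1 : (E.states n).pc (E.sched n) = PC.remainder ∧
      (E.states (n+1)).pc (E.sched n) ≠ PC.remainder ∧ (E.states (n+1)).lk (E.sched n) = some L
  · refine Or.inr (Or.inl ⟨E.sched n, rfl, h1.1, ?_⟩)
    rw [hQ, Qstep, if_pos h1]
  · by_cases h2 : ((E.states n).pc (E.sched n) = PC.entrySpin ∧
          (E.states n).lk (E.sched n) = some L ∧ (E.states (n+1)).pc (E.sched n) = PC.crit) ∨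
        ((E.states n).pc (E.sched n) = PC.exitCAS ∧ (E.states n).lk (E.sched n) = some L ∧
          (E.states (n+1)).pc (E.sched n) = PC.remainder)
    · rcases hq : Q E n L with _ | ⟨h, tl⟩
      · left; rw [hQ, Qstep, if_neg h1, if_pos h2, hq]; rfl
      · refine Or.inr (Or.inr ⟨h, tl, rfl, ?_, ?_⟩)
        · rw [hQ, Qstep, if_neg h1, if_pos h2, hq]; rfl
        · rcases hI.head_pc L h tl hq with h' | h' | h' | h' <;> simp [h']
    · left; rw [hQ, Qstep, if_neg h1, if_neg h2]

/-- pc, lk, pred of a non-scheduled thread do not change. -/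
private theorem other_pers (E : Execution Thread Lock) (n : ℕ) {t : Thread}
    (h : t ≠ E.sched n) :
    (E.states (n+1)).pc t = (E.states n).pc t ∧
    (E.states (n+1)).lk t = (E.states n).lk t ∧
    (E.states (n+1)).pred t = (E.states n).pred t := by
  rcases step_cases (E.steps n) with hs | ⟨L, _, hs⟩ | ⟨p, L, _, _, _, _, hs⟩ | ⟨_, hs⟩ |
      ⟨L, _, _, _, hs⟩ | ⟨L, _, _, _, hs⟩ | ⟨L, _, _, hs⟩ | ⟨_, _, hs⟩ <;>
    rw [hs] <;> simp_all [Function.update_of_ne h]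

/-- A spinning thread stays in the queue, spinning, unless it enters the CS. -/
private theorem persist_step (E : Execution Thread Lock) (n : ℕ) (hI : Inv E n) {t : Thread}
    {L : Lock} (hmem : t ∈ Q E n L) (hpc : (E.states n).pc t = PC.entrySpin)
    (hlk : (E.states n).lk t = some L) (hne : ¬ entersCSAt E n t L) :
    t ∈ Q E (n+1) L ∧ (E.states (n+1)).pc t = PC.entrySpin ∧
      (E.states (n+1)).lk t = some L := by
  have hmem' : t ∈ Q E (n+1) L := by
    rcases Q_succ_cases E n hI L with hQ | ⟨u, _, _, hQ⟩ | ⟨h, tl, hq, hQ, hh⟩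
    · rwa [hQ]
    · rw [hQ]; exact List.mem_append_left _ hmem
    · rw [hQ]
      rcases List.mem_cons.1 (hq ▸ hmem) with rfl | h'
      · exact absurd hpc hh
      · exact h'
  have hrest : (E.states (n+1)).pc t = PC.entrySpin ∧ (E.states (n+1)).lk t = some L := by
    by_cases hts : t = E.sched n
    · subst hts
      rcases step_cases (E.steps n) with hs | ⟨L0, h0, hs⟩ | ⟨p, L0, h0, hp0, hl0, hg0, hs⟩ |
          ⟨h0, hs⟩ | ⟨L0, h0, h1, h2, hs⟩ | ⟨L0, h0, h1, h2, hs⟩ | ⟨L0, h0, h1, hs⟩ |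
          ⟨h0, h1, hs⟩ <;> try (rw [hpc] at h0; cases h0)
      · rw [hs]; exact ⟨hpc, hlk⟩
      · exfalso
        apply hne
        refine ⟨rfl, by simp [hpc], by rw [hs]; simp, by rw [hs]; simpa using hlk⟩
    · exact ⟨(other_pers E n hts).1.trans hpc, (other_pers E n hts).2.1.trans hlk⟩
  exact ⟨hmem', hrest.1, hrest.2⟩

/-- Effect of an entry doorstep. -/
private theorem doorstep_effect (E : Execution Thread Lock) {n : ℕ} {t : Thread} {L : Lock}
    (hd : doorstepAt E n t L) :
    ((E.states n).Tail L = none ∧ entersCSAt E n t L) ∨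
    ((E.states n).Tail L ≠ none ∧ Q E (n+1) L = Q E n L ++ [t] ∧
      (E.states (n+1)).pc t = PC.entrySpin ∧ (E.states (n+1)).lk t = some L) := by
  obtain ⟨hsch, hpc, hpc', hlk'⟩ := hd
  subst hsch
  rcases step_cases (E.steps n) with hs | ⟨L0, h0, hs⟩ | ⟨p, L0, h0, hp0, hl0, hg0, hs⟩ |
      ⟨h0, hs⟩ | ⟨L0, h0, h1, h2, hs⟩ | ⟨L0, h0, h1, h2, hs⟩ | ⟨L0, h0, h1, hs⟩ |
      ⟨h0, h1, hs⟩ <;> try (rw [hpc] at h0; cases h0)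
  · exact absurd (hs ▸ hpc) hpc'
  · -- doorstep on L0
    have hL0 : L0 = L := by
      have h := hlk'
      rw [hs] at h; simp at h; exact h
    rw [hL0] at hs
    by_cases ht : (E.states n).Tail L = none
    · left
      refine ⟨ht, rfl, by simp [hpc], ?_, hlk'⟩
      rw [hs]; simp [ht]
    · right
      have hpcE : (E.states (n+1)).pc (E.sched n) = PC.entrySpin := by
        rw [hs]; simp [ht]
      refine ⟨ht, ?_, hpcE, hlk'⟩
      show Qstep (E.states n) (E.states (n+1)) (E.sched n) L (Q E n L) = _
      rw [Qstep, if_pos ⟨hpc, hpc', hlk'⟩]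

end FifoAux

/-- FIFO: threads enter the critical section protected by `L` in exactly the order in
which they execute the entry doorstep for `L`; no thread that executes the entry
doorstep for `L` after another enters the critical section protected by `L` before it. -/
theorem fifo {Thread Lock : Type} [DecidableEq Thread] [DecidableEq Lock]
    [Fintype Thread] (E : Execution Thread Lock) (L : Lock) (Ti Tj : Thread)
    (ni nj mi mj : ℕ)
    (hdj : doorstepAt E nj Tj L) (hdi : doorstepAt E ni Ti L) (hord : nj < ni)
    (hmj : firstEntryAfter E nj mj Tj L) (hmi : firstEntryAfter E ni mi Ti L) :
    ¬ mi < mj := by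
  intro hlt
  have hinv := inv_all E
  have hnimi : ni ≤ mi := hmi.1
  have hnjmj : nj ≤ mj := hmj.1
  rcases doorstep_effect E hdj with ⟨_, henter⟩ | ⟨hTne, hQj, hpcj, hlkj⟩
  · -- Tj entered immediately: mj = nj, contradiction with mi < mj and nj < ni ≤ mi
    have hmjnj : mj = nj := by
      rcases Nat.lt_or_ge nj mj with h | h
      · exact absurd henter (hmj.2.2 nj le_rfl h)
      · omega
    omega
  · have hmemj : Tj ∈ Q E (nj+1) L := by rw [hQj]; simp
    -- Tj stays spinning in the queue throughout (nj, mj]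
    have HTj : ∀ n, nj + 1 ≤ n → n ≤ mj → Tj ∈ Q E n L ∧
        (E.states n).pc Tj = PC.entrySpin ∧ (E.states n).lk Tj = some L := by
      intro n h1
      induction n, h1 using Nat.le_induction with
      | base => exact fun _ => ⟨hmemj, hpcj, hlkj⟩
      | succ n hn ih =>
        intro h2
        obtain ⟨hm, hp, hl⟩ := ih (by omega)
        exact persist_step E n (hinv n) hm hp hl (hmj.2.2 n (by omega) (by omega))
    have hTiTj : Ti ≠ Tj := by
      intro he
      have h1 := (HTj ni (by omega) (by omega)).2.1
      rw [← he, hdi.2.1] at h1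
      cases h1
    rcases doorstep_effect E hdi with ⟨hTnone, _⟩ | ⟨_, hQi, hpci, hlki⟩
    · -- queue would be empty, but Tj is in it
      have h0 := (hinv ni).tail_eq L
      rw [hTnone] at h0
      have hqe : Q E ni L = [] := List.getLast?_eq_none_iff.1 h0.symm
      have := (HTj ni (by omega) (by omega)).1
      rw [hqe] at this
      simp at this
    · have hmemi : Ti ∈ Q E (ni+1) L := by rw [hQi]; simp
      -- Ti stays behind Tj in the queue throughout (ni, mi]
      have Hsub : ∀ n, ni + 1 ≤ n → n ≤ mi →
          (Ti ∈ Q E n L ∧ (E.states n).pc Ti = PC.entrySpin ∧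
            (E.states n).lk Ti = some L) ∧ List.Sublist [Tj, Ti] (Q E n L) := by
        intro n h1
        induction n, h1 using Nat.le_induction with
        | base =>
          intro _
          refine ⟨⟨hmemi, hpci, hlki⟩, ?_⟩
          rw [hQi]
          exact (List.singleton_sublist.2
            (HTj ni (by omega) (by omega)).1).append (List.Sublist.refl [Ti])
        | succ n hn ih =>
          intro h2
          obtain ⟨⟨hm, hp, hl⟩, hs⟩ := ih (by omega)
          have hne : ¬ entersCSAt E n Ti L := hmi.2.2 n (by omega) (by omega)
          refine ⟨persist_step E n (hinv n) hm hp hl hne, ?_⟩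
          rcases Q_succ_cases E n (hinv n) L with hQ | ⟨u, _, hupc, hQ⟩ | ⟨h, tl, hq, hQ, hh⟩
          · rwa [hQ]
          · rw [hQ]; exact hs.trans (List.sublist_append_left _ _)
          · rw [hQ]
            have hTjn1 : Tj ∈ Q E (n+1) L := (HTj (n+1) (by omega) (by omega)).1
            rw [hQ] at hTjn1
            exact sublistTailOfMem (hq ▸ hs) hTjn1 (hq ▸ (hinv n).nodup L)
      have hnilt : ni < mi := by
        rcases Nat.lt_or_ge ni mi with h | h
        · exact h
        · exfalso
          have hemi : mi = ni := by omega
          have hcr := hmi.2.1.2.2.1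
          rw [hemi, hpci] at hcr
          cases hcr
      obtain ⟨⟨hmTi, hpTi, hlTi⟩, hsub⟩ := Hsub mi (by omega) le_rfl
      obtain ⟨hsch, hnc, hpc', hlk'⟩ := hmi.2.1
      -- the step at mi must be a spinAcquire
      rcases step_cases (E.steps mi) with hs | ⟨L0, h0, hs⟩ | ⟨p, L0, h0, hp0, hl0, hg0, hs⟩ |
          ⟨h0, hs⟩ | ⟨L0, h0, h1, h2, hs⟩ | ⟨L0, h0, h1, h2, hs⟩ | ⟨L0, h0, h1, hs⟩ |
          ⟨h0, h1, hs⟩ <;> try (rw [hsch, hpTi] at h0; cases h0)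
      · rw [hs, hpTi] at hpc'; cases hpc'
      · -- spinAcquire
        rw [hsch] at hp0 hl0
        have hL0 : L0 = L := by
          rw [hlTi] at hl0; exact (Option.some_inj.1 hl0).symm
        rw [hL0] at hg0
        obtain ⟨r2, hqmi, hppc⟩ := acquire_shape E mi (hinv mi) hpTi hlTi hp0 hg0
        have hTjmi : Tj ∈ Q E mi L ∧ (E.states mi).pc Tj = PC.entrySpin ∧
            (E.states mi).lk Tj = some L := HTj mi (by omega) (by omega)
        have hnd : (Q E mi L).Nodup := (hinv mi).nodup L
        rw [hqmi] at hsub hnd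
        have hTjp : Tj ≠ p := by
          intro he; rw [he, hppc] at hTjmi; cases hTjmi.2.1
        have hTj1 : Tj ∈ Ti :: r2 := by
          have := hTjmi.1
          rw [hqmi] at this
          rcases List.mem_cons.1 this with h' | h'
          · exact absurd h' hTjp
          · exact h'
        have hs1 : List.Sublist [Tj, Ti] (Ti :: r2) := sublistTailOfMem hsub hTj1 hnd
        have hTj2 : Tj ∈ r2 := by
          rcases List.mem_cons.1 hTj1 with h' | h'
          · exact absurd h' hTiTj.symm
          · exact h'
        have hs2 : List.Sublist [Tj, Ti] r2 := sublistTailOfMem hs1 hTj2 (List.nodup_cons.1 hnd).2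
        have hTir2 : Ti ∈ r2 := hs2.subset (by simp)
        exact (List.nodup_cons.1 (List.nodup_cons.1 hnd).2).1 hTir2

end Hemlock
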